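/- arXiv:2604.12468 — 3 statements merged into one kernel-verified Lean document; each statement's English description precedes it below -/
import Mathlib

section
/- Let σ : B* → B* be a k-uniform morphism (k ≥ 2) on a finite alphabet B that is prolongable on a letter b (i.e., σ(b) = b x for some word x of length k − 1), and let u = σ^ω(b) be its fixed point. Then u satisfies Condition (*)_{1+1/m}, where m = |B|: there exist finite words U_n, V_n with U_n V_n^{1+1/m} a prefix of u for each n ≥ 1, |U_n|/|V_n| ≤ m − 1, and |V_n| = k^n · |V_1|/k strictly increasing. -/
/-- `W ^ x` for a word `W` and real `x > 0`. -/
noncomputable def wordPow {A : Type*} (W : List A) (x : ℝ) : List A :=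
  (List.replicate ⌊x⌋₊ W).flatten ++ W.take ⌈(x - ⌊x⌋₊) * W.length⌉₊

/-- The finite word `L` is a prefix of the infinite word `a`. -/
def IsPrefixOfSeq {A : Type*} (L : List A) (a : ℕ → A) : Prop :=
  ∀ i : Fin L.length, L.get i = a i

/-- The fixed point of a `k`-uniform morphism prolongable on `b` satisfies
Condition `(*)_{1+1/m}` where `m = |B|`, with explicit bounds on the witnesses. -/
theorem stmt_4 {B : Type*} [Fintype B] (m k : ℕ) (hm : Fintype.card B = m)
    (hk : 2 ≤ k) (σ : B → List B) (huniform : ∀ c : B, (σ c).length = k)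
    (b : B) (x : List B) (hprol : σ b = b :: x) (hx : x.length = k - 1)
    (u : ℕ → B) (hu0 : u 0 = b)
    (hfix : ∀ N : ℕ, (List.ofFn fun i : Fin N => u i).flatMap σ
      = List.ofFn fun i : Fin (k * N) => u i) :
    ∃ U V : ℕ → List B,
      (∀ n, 1 ≤ n → V n ≠ []) ∧
      (∀ n, 1 ≤ n → IsPrefixOfSeq (U n ++ wordPow (V n) (1 + 1 / m)) u) ∧
      (∀ n, 1 ≤ n → ((U n).length : ℝ) ≤ (m - 1) * (V n).length) ∧
      (∀ n, 1 ≤ n → k * (V n).length = k ^ n * (V 1).length) ∧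
      (∀ n₁ n₂, 1 ≤ n₁ → n₁ < n₂ → (V n₁).length < (V n₂).length) := by
  have hm1 : 1 ≤ m := hm ▸ Fintype.card_pos_iff.mpr ⟨b⟩
  -- segments of u
  set S : ℕ → ℕ → List B := fun a c => List.ofFn fun t : Fin c => u (a + t) with hS
  have hSlen : ∀ a c, (S a c).length = c := by intro a c; simp [hS]
  have hSsplit : ∀ a c d, S a (c + d) = S a c ++ S (a + c) d := by
    intro a c d
    apply List.ext_getElem (by simp [hS])
    intro t h1 h2
    simp only [hS, List.getElem_append, List.getElem_ofFn, List.length_ofFn]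
    split_ifs with h
    · rfl
    · congr 1; omega
  -- iterated morphism
  set Φ : ℕ → List B → List B := fun n => (fun w => w.flatMap σ)^[n] with hΦ
  have hflen : ∀ w : List B, (w.flatMap σ).length = k * w.length := by
    intro w
    induction w with
    | nil => simp
    | cons c w ihw =>
      simp only [List.flatMap_cons, List.length_append, huniform, ihw, List.length_cons]
      ring
  have hΦapp : ∀ n (a c : List B), Φ n (a ++ c) = Φ n a ++ Φ n c := by
    intro n
    induction n with
    | zero => intro a c; simp [hΦ]
    | succ n ih =>
      intro a c
      simp only [hΦ, Function.iterate_succ_apply, List.flatMap_append]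
      exact ih _ _
  have hΦlen : ∀ n (w : List B), (Φ n w).length = k ^ n * w.length := by
    intro n
    induction n with
    | zero => intro w; simp [hΦ]
    | succ n ih =>
      intro w
      simp only [hΦ, Function.iterate_succ_apply]
      rw [show ((fun w : List B => w.flatMap σ)^[n] (w.flatMap σ)) = Φ n (w.flatMap σ) from rfl,
        ih, hflen]
      ring
  have hΦS : ∀ n N, Φ n (S 0 N) = S 0 (k ^ n * N) := by
    intro n
    induction n with
    | zero => intro N; simp [hΦ]
    | succ n ih =>
      intro N
      simp only [hΦ, Function.iterate_succ_apply]
      have h1 : (S 0 N).flatMap σ = S 0 (k * N) := by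
        simpa [hS] using hfix N
      rw [show ((fun w : List B => w.flatMap σ)^[n] ((S 0 N).flatMap σ))
          = Φ n ((S 0 N).flatMap σ) from rfl, h1, ih]
      congr 1
      ring
  -- pigeonhole
  obtain ⟨i, j, hij, hjm, huij⟩ : ∃ i j : ℕ, i < j ∧ j ≤ m ∧ u i = u j := by
    obtain ⟨s, t, hne, hf⟩ := Fintype.exists_ne_map_eq_of_card_lt
      (fun r : Fin (m + 1) => u r) (by simp [hm])
    rcases lt_or_gt_of_ne hne with h | h
    · exact ⟨s, t, h, by omega, hf⟩
    · exact ⟨t, s, h, by omega, hf.symm⟩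
  set p := j - i with hp
  have hp1 : 1 ≤ p := by omega
  refine ⟨fun n => Φ (n - 1) (S 0 i), fun n => Φ (n - 1) (S i p), ?_, ?_, ?_, ?_, ?_⟩
  · intro n hn
    show Φ (n - 1) (S i p) ≠ []
    intro hempty
    have hlen := congrArg List.length hempty
    rw [hΦlen, hSlen, List.length_nil] at hlen
    rcases Nat.mul_eq_zero.mp hlen with h | h
    · exact pow_ne_zero _ (by omega) h
    · omega
  · intro n hn
    obtain ⟨n', rfl⟩ : ∃ n', n = n' + 1 := ⟨n - 1, by omega⟩
    simp only [Nat.add_sub_cancel]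
    set Un := Φ n' (S 0 i) with hUn
    set Vn := Φ n' (S i p) with hVn
    have hVnlen : Vn.length = k ^ n' * p := by rw [hVn, hΦlen, hSlen]
    set t := ⌈(Vn.length : ℝ) / m⌉₊ with ht
    have hword : wordPow Vn (1 + 1 / m) = Vn ++ Vn.take t := by
      unfold wordPow
      rcases eq_or_lt_of_le hm1 with h1 | h2
      · have hm' : (m : ℝ) = 1 := by exact_mod_cast h1.symm
        have h2' : (1:ℝ) + 1 / m = 2 := by rw [hm']; norm_num
        rw [ht, h2', hm']
        norm_num [List.replicate, List.take_length]
      · have hfl : ⌊(1 + 1 / (m : ℝ))⌋₊ = 1 := by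
          rw [Nat.floor_eq_iff (by positivity)]
          constructor
          · nlinarith [one_div_pos.mpr (show (0:ℝ) < m by positivity)]
          · have : (1:ℝ)/m ≤ 1/2 := by
              apply div_le_div_of_nonneg_left <;> norm_num
              exact_mod_cast h2
            linarith
        have harg : ((1 + 1/(m:ℝ)) - (⌊(1 + 1/(m:ℝ))⌋₊ : ℝ)) * Vn.length
            = (Vn.length : ℝ) / m := by
          rw [hfl]; push_cast; ring
        rw [harg, ← ht, hfl]
        simp
    rw [hword]
    have hij' : i + p = j := by omega
    have e1 : S 0 j = S 0 i ++ S i p := by rw [← hij', hSsplit]; norm_num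
    have hUV : Un ++ Vn = S 0 (k ^ n' * j) := by
      rw [hUn, hVn, ← hΦapp, ← e1, hΦS]
    have hsing : S i p = S i 1 ++ S (i + 1) (p - 1) := by
      rw [← hSsplit]; congr 1; omega
    have hS1 : ∀ a, S a 1 = [u a] := by intro a; simp [hS]
    have htle : t ≤ k ^ n' := by
      rw [ht, Nat.ceil_le, hVnlen]
      rw [div_le_iff₀ (by positivity)]
      push_cast
      have : (p : ℝ) ≤ m := by exact_mod_cast (by omega : p ≤ m)
      nlinarith [pow_pos (show (0:ℝ) < k by positivity) n']
    have htake : Vn.take t = (Φ n' [u j]).take t := by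
      rw [hVn, hsing, hΦapp, hS1, List.take_append_of_le_length, huij]
      rw [hΦlen]
      simpa using htle
    have hpref : Un ++ (Vn ++ Vn.take t) <+: S 0 (k ^ n' * (j + 1)) := by
      have e2 : S 0 (j + 1) = S 0 j ++ S j 1 := by rw [hSsplit]; norm_num
      have hbig : S 0 (k ^ n' * (j + 1)) = S 0 (k ^ n' * j) ++ Φ n' [u j] := by
        calc S 0 (k ^ n' * (j + 1)) = Φ n' (S 0 (j + 1)) := (hΦS n' (j + 1)).symm
          _ = Φ n' (S 0 j) ++ Φ n' (S j 1) := by rw [e2, hΦapp]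
          _ = S 0 (k ^ n' * j) ++ Φ n' [u j] := by rw [hΦS, hS1]
      rw [hbig, ← List.append_assoc, hUV, htake]
      exact ⟨(Φ n' [u j]).drop t, by rw [List.append_assoc, List.take_append_drop]⟩
    intro idx
    rw [List.get_eq_getElem, hpref.getElem idx.isLt]
    simp [hS]
  · intro n hn
    show ((Φ (n - 1) (S 0 i)).length : ℝ) ≤ (m - 1) * (Φ (n - 1) (S i p)).length
    rw [hΦlen, hΦlen, hSlen, hSlen]
    push_cast
    have h1 : (i : ℝ) ≤ (m - 1) * p := by
      have hi : (i : ℝ) ≤ m - 1 := by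
        have h2 : i + 1 ≤ m := by omega
        have h3 := (Nat.cast_le (α := ℝ)).mpr h2
        push_cast at h3; linarith
      have hp' : (1:ℝ) ≤ p := by exact_mod_cast hp1
      nlinarith
    nlinarith [pow_pos (show (0:ℝ) < k by positivity) (n - 1)]
  · intro n hn
    obtain ⟨n', rfl⟩ : ∃ n', n = n' + 1 := ⟨n - 1, by omega⟩
    show k * (Φ (n' + 1 - 1) (S i p)).length = k ^ (n' + 1) * (Φ (1 - 1) (S i p)).length
    simp only [hΦlen, hSlen, Nat.add_sub_cancel, Nat.sub_self, pow_zero, one_mul]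
    ring
  · intro n₁ n₂ h1 h2
    show (Φ (n₁ - 1) (S i p)).length < (Φ (n₂ - 1) (S i p)).length
    simp only [hΦlen, hSlen]
    exact Nat.mul_lt_mul_of_pos_right
      (Nat.pow_lt_pow_right (by omega) (by omega)) (by omega)
end

section
/- Every k-automatic sequence over a finite alphabet is a stammering sequence; that is, it satisfies Condition (*)_w for some real number w > 1. -/
/-- Condition `(*)_w` for a sequence `a` over an alphabet. -/
def ConditionStar {A : Type*} (w : ℝ) (a : ℕ → A) : Prop :=
  ∃ U V : ℕ → List A,
    (∀ n, V n ≠ []) ∧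
    (∀ n, IsPrefixOfSeq (U n ++ wordPow (V n) w) a) ∧
    (∃ C : ℝ, ∀ n, ((U n).length : ℝ) ≤ C * (V n).length) ∧
    StrictMono fun n => (V n).length

/-!
A finite kernel forces two indices `i < i + d` at which all kernel sequences agree, i.e.
`a (k^m i + t) = a (k^m (i + d) + t)` for all `m` and `t < k^m`. So the block of `a` of length `k^m`
starting at `k^m i` reappears at `k^m (i + d)`: the prefix of length `k^m (i + d + 1)` has the form
`U V V'` with `|U| = k^m i`, `|V| = k^m d` and `V'` the prefix of `V` of length `k^m`, which gives
`(*)_w` for `w = 1 + 1 / (d + 1)`.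
-/

section

variable {A : Type*}

theorem range_append_range' (m l : ℕ) : List.range m ++ List.range' m l = List.range (m + l) := by
  simpa [List.range_eq_range'] using List.range'_append_1 (s := 0) (m := m) (n := l)

theorem isPrefixOfSeq_map_range (a : ℕ → A) (n : ℕ) :
    IsPrefixOfSeq ((List.range n).map a) a :=
  fun i => by simp

theorem IsPrefixOfSeq.of_prefix {L₁ L₂ : List A} {a : ℕ → A} (h : L₁ <+: L₂)
    (h₂ : IsPrefixOfSeq L₂ a) : IsPrefixOfSeq L₁ a := fun i => by
  simpa [h.getElem i.2] using h₂ ⟨i, i.2.trans_le h.length_le⟩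

theorem map_range'_eq_of_forall_add_eq {a : ℕ → A} {p q n : ℕ}
    (h : ∀ t < n, a (p + t) = a (q + t)) :
    (List.range' p n).map a = (List.range' q n).map a :=
  List.ext_getElem (by simp) fun t ht _ => by simpa using h t (by simpa using ht)

theorem wordPow_prefix_append {V W : List A} {w : ℝ} (hw₁ : 1 ≤ w) (hw₂ : w < 2)
    (hW : W <+: V) (hlen : (w - 1) * V.length ≤ W.length) :
    wordPow V w <+: V ++ W := by
  have hfloor : ⌊w⌋₊ = 1 := by
    rw [Nat.floor_eq_iff (by linarith)]
    exact ⟨by exact_mod_cast hw₁, by norm_num [hw₂]⟩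
  rw [wordPow, hfloor, List.prefix_iff_eq_take.1 hW]
  simpa using List.take_prefix_take_left (Nat.ceil_le.2 (by simpa using hlen))

theorem conditionStar_of_repeated_blocks {a : ℕ → A} {s : ℕ → ℕ} (hs : StrictMono s)
    (hs₀ : ∀ n, 0 < s n) {i d : ℕ} (hd : 0 < d)
    (hrep : ∀ n, ∀ t < s n, a (s n * i + t) = a (s n * (i + d) + t))
    {w : ℝ} (hw₁ : 1 < w) (hw₂ : w < 2) (hwd : (w - 1) * d ≤ 1) : ConditionStar w a := by
  -- `U = a[0, s i)` and `V = a[s i, s (i + d))`; `V` is followed by `a[s (i + d), s (i + d) + s)`,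
  -- which repeats the first `s` letters of `V`.
  refine ⟨fun n => (List.range (s n * i)).map a, fun n => (List.range' (s n * i) (s n * d)).map a,
    fun n => ?_, fun n => ?_, ⟨i, fun n => ?_⟩, fun m n hmn => ?_⟩
  · simpa using ⟨(hs₀ n).ne', hd.ne'⟩
  · have hWV : (List.range' (s n * i) (s n)).map a <+: (List.range' (s n * i) (s n * d)).map a := by
      rw [← List.take_range'_of_length_ge (Nat.le_mul_of_pos_right _ hd)]
      exact (List.take_prefix _ _).map a
    have hlen : (w - 1) * ((List.range' (s n * i) (s n * d)).map a).length ≤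
        ((List.range' (s n * i) (s n)).map a).length := by
      simp only [List.length_map, List.length_range', Nat.cast_mul]
      nlinarith [(Nat.cast_pos.2 (hs₀ n) : (0 : ℝ) < s n)]
    have hUVW : (List.range (s n * i)).map a ++ ((List.range' (s n * i) (s n * d)).map a ++
        (List.range' (s n * i) (s n)).map a) = (List.range (s n * (i + d) + s n)).map a := by
      rw [map_range'_eq_of_forall_add_eq (hrep n), ← List.map_append, ← List.map_append,
        ← List.append_assoc, range_append_range', Nat.mul_add, range_append_range']
    refine IsPrefixOfSeq.of_prefix ?_ (hUVW ▸ isPrefixOfSeq_map_range a _)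
    exact (List.prefix_append_right_inj _).2 (wordPow_prefix_append hw₁.le hw₂ hWV hlen)
  · have : s n * i ≤ i * (s n * d) := by
      rw [← mul_assoc, mul_comm (s n) i]
      exact Nat.le_mul_of_pos_right _ hd
    simpa using (Nat.cast_le (α := ℝ)).2 this
  · simpa using Nat.mul_lt_mul_of_pos_right (hs hmn) hd

def seqKernel (k : ℕ) (a : ℕ → A) : Set (ℕ → A) :=
  {s | ∃ i j : ℕ, j < k ^ i ∧ s = fun n => a (k ^ i * n + j)}

theorem exists_repeat_of_seqKernel_finite [Finite A] {k : ℕ} {a : ℕ → A}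
    (hker : (seqKernel k a).Finite) :
    ∃ i d, 0 < d ∧ ∀ m, ∀ t < k ^ m, a (k ^ m * i + t) = a (k ^ m * (i + d) + t) := by
  have := hker.to_subtype
  obtain ⟨x, y, hxy, hf⟩ := Set.finite_univ.exists_lt_map_eq_of_forall_mem
    (f := fun n (s : seqKernel k a) => (s : ℕ → A) n) fun _ => Set.mem_univ _
  refine ⟨x, y - x, Nat.sub_pos_of_lt hxy, fun m t ht => ?_⟩
  rw [Nat.add_sub_cancel' hxy.le]
  exact congrFun hf ⟨_, m, t, ht, rfl⟩

end

/-- Every `k`-automatic sequence over a finite alphabet (finite `k`-kernel)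
is a stammering sequence: it satisfies Condition `(*)_w` for some real `w > 1`. -/
theorem stmt_5 {A : Type*} [Finite A] (k : ℕ) (hk : 2 ≤ k) (a : ℕ → A)
    (hauto : {s : ℕ → A | ∃ i j : ℕ, j < k ^ i ∧ s = fun n => a (k ^ i * n + j)}.Finite) :
    ∃ w : ℝ, 1 < w ∧ ConditionStar w a := by
  obtain ⟨i, d, hd, hrep⟩ := exists_repeat_of_seqKernel_finite hauto
  have hd₁ : (1 : ℝ) ≤ d := Nat.one_le_cast.2 hd
  have hw₁ : 1 < 1 + ((d : ℝ) + 1)⁻¹ := lt_add_of_pos_right 1 (by positivity)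
  have hw₂ : 1 + ((d : ℝ) + 1)⁻¹ < 2 := by
    linarith [inv_lt_one_of_one_lt₀ (by linarith : (1 : ℝ) < d + 1)]
  have hwd : (1 + ((d : ℝ) + 1)⁻¹ - 1) * d ≤ 1 := by
    rw [add_sub_cancel_left, inv_mul_le_iff₀ (by positivity)]
    linarith
  exact ⟨_, hw₁, conditionStar_of_repeated_blocks (pow_right_strictMono₀ hk)
    (fun n => by positivity) hd hrep hw₁ hw₂ hwd⟩
end

section
/- Let a, b ≥ 2 be integers, and for each n let (p_k^{(n)}), (q_k^{(n)}) be integer sequences, eventually periodic with preperiods r_n, r'_n and periods dividing s_n, s'_n respectively, with all values of f(p_i^{(n)}, q_j^{(n)}) bounded by M. Then α_n := ∑_{i,j≥0} f(p_i^{(n)}, q_j^{(n)}) a^{−i} b^{−j} is a rational number of the form P_n(a,b) / (a^{r_n}(a^{s_n}−1) b^{r'_n}(b^{s'_n}−1)), where P_n ∈ ℤ[X,Y] has X-degree at most r_n + s_n, Y-degree at most r'_n + s'_n, and coefficients of absolute value at most 4M. -/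
/-!
If `c` is eventually periodic (preperiod `r`, period `s`), multiplying `S = ∑ c_k x^{-k}` by
`x^{r+s}` and by `x^r` shifts the series so that, by periodicity, the two tails coincide; hence
`x^r (x^s - 1) S = ∑_{k<r+s} c_k x^{r+s-k} - ∑_{k<r} c_k x^{r-k}`, a polynomial whose
coefficients are differences of two values of `c`. Summing the double series first over `j` and
then over `i` uses this twice, so each coefficient of the numerator is an alternating sum of
four values of `f`, hence at most `4M` in absolute value.
-/

open Finset MvPolynomial

section Numerator

variable {R : Type*}

def revCoeff [Zero R] (n : ℕ) (c : ℕ → R) (u : ℕ) : R :=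
  if 1 ≤ u ∧ u ≤ n then c (n - u) else 0

def periodicNumer [Sub R] [Zero R] (r s : ℕ) (c : ℕ → R) (u : ℕ) : R :=
  revCoeff (r + s) c u - revCoeff r c u

lemma sum_revCoeff_mul_pow [CommSemiring R] (x : R) (c : ℕ → R) {n N : ℕ} (h : n ≤ N) :
    ∑ u ∈ range (N + 1), revCoeff n c u * x ^ u = ∑ k ∈ range n, c k * x ^ (n - k) := by
  rw [← sum_subset (range_subset_range.2 (by omega : n + 1 ≤ N + 1)) fun u _ hu => by
      simp only [mem_range] at hu; simp [revCoeff, show ¬ u ≤ n by omega],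
    sum_range_succ', ← sum_range_reflect]
  simp only [revCoeff, show ¬(1 ≤ 0 ∧ 0 ≤ n) by omega, if_false, zero_mul, add_zero]
  refine sum_congr rfl fun k hk => ?_
  rw [mem_range] at hk
  rw [if_pos (by omega), show n - (n - 1 - k + 1) = k by omega, show n - 1 - k + 1 = n - k by omega]

lemma abs_periodicNumer_le [Ring R] [LinearOrder R] [IsOrderedRing R] {c : ℕ → R} {M : R}
    (hc : ∀ k, |c k| ≤ M) (r s u : ℕ) : |periodicNumer r s c u| ≤ 2 * M := by
  have hrev : ∀ n, |revCoeff n c u| ≤ M := fun n => by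
    unfold revCoeff
    split_ifs
    exacts [hc _, abs_zero.trans_le ((abs_nonneg _).trans (hc 0))]
  calc |periodicNumer r s c u| ≤ |revCoeff (r + s) c u| + |revCoeff r c u| := abs_sub _ _
    _ ≤ 2 * M := two_mul M ▸ add_le_add (hrev _) (hrev _)

lemma periodicNumer_sum_mul_pow [CommRing R] (r s : ℕ) (g : ℕ → ℕ → R) (y : R) (t : Finset ℕ)
    (u : ℕ) : periodicNumer r s (fun i => ∑ v ∈ t, g i v * y ^ v) u =
      ∑ v ∈ t, periodicNumer r s (fun i => g i v) u * y ^ v := by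
  simp only [periodicNumer, revCoeff]
  split_ifs <;> simp [sub_mul, sum_sub_distrib]

lemma Int.cast_periodicNumer [Ring R] (r s : ℕ) (c : ℕ → ℤ) (u : ℕ) :
    ((periodicNumer r s c u : ℤ) : R) = periodicNumer r s (fun k => (c k : R)) u := by
  simp only [periodicNumer, revCoeff]
  split_ifs <;> simp

end Numerator

section Series

variable {K : Type*} [Field K] [TopologicalSpace K] [IsTopologicalRing K] [T2Space K]

lemma pow_mul_tsum_div_pow {x : K} (hx : x ≠ 0) {c : ℕ → K} (hc : Summable fun k => c k / x ^ k)
    (n : ℕ) : x ^ n * ∑' k, c k / x ^ k =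
      ∑ k ∈ range n, c k * x ^ (n - k) + ∑' k, c (k + n) / x ^ k := by
  rw [← hc.sum_add_tsum_nat_add n, mul_add, mul_sum, ← tsum_mul_left]
  congr 1
  · refine sum_congr rfl fun k hk => ?_
    rw [pow_sub₀ x hx (mem_range.1 hk).le]
    ring
  · refine tsum_congr fun k => ?_
    rw [pow_add]
    field_simp

lemma mul_tsum_div_pow_of_periodic {x : K} (hx : x ≠ 0) {c : ℕ → K}
    (hc : Summable fun k => c k / x ^ k) {r s : ℕ} (hper : ∀ k, r ≤ k → c (k + s) = c k) :
    x ^ r * (x ^ s - 1) * ∑' k, c k / x ^ k =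
      ∑ u ∈ range (r + s + 1), periodicNumer r s c u * x ^ u := by
  have htail : ∑' k, c (k + (r + s)) / x ^ k = ∑' k, c (k + r) / x ^ k :=
    tsum_congr fun k => by rw [← add_assoc, hper _ (by omega)]
  simp only [periodicNumer, sub_mul, sum_sub_distrib, sum_revCoeff_mul_pow x c le_rfl,
    sum_revCoeff_mul_pow x c (by omega : r ≤ r + s)]
  calc x ^ r * (x ^ s - 1) * ∑' k, c k / x ^ k
      = x ^ (r + s) * ∑' k, c k / x ^ k - x ^ r * ∑' k, c k / x ^ k := by ring
    _ = _ := by rw [pow_mul_tsum_div_pow hx hc, pow_mul_tsum_div_pow hx hc, htail]; ring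

end Series

lemma summable_div_pow_mul_pow {x y : ℝ} (hx : 1 < x) (hy : 1 < y) {c : ℕ × ℕ → ℝ} {M : ℝ}
    (hc : ∀ ij, |c ij| ≤ M) : Summable fun ij : ℕ × ℕ => c ij / (x ^ ij.1 * y ^ ij.2) := by
  have hgeo : Summable fun ij : ℕ × ℕ => M * (x⁻¹ ^ ij.1 * y⁻¹ ^ ij.2) :=
    ((summable_geometric_of_lt_one (by positivity) (inv_lt_one_of_one_lt₀ hx)).mul_of_nonneg
      (summable_geometric_of_lt_one (by positivity) (inv_lt_one_of_one_lt₀ hy))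
      (fun _ => by positivity) (fun _ => by positivity)).mul_left M
  refine hgeo.of_norm_bounded fun ij => ?_
  have hpos : 0 < x ^ ij.1 * y ^ ij.2 := by positivity
  rw [Real.norm_eq_abs, abs_div, abs_of_pos hpos, inv_pow, inv_pow, ← mul_inv, ← div_eq_mul_inv]
  exact div_le_div_of_nonneg_right (hc ij) hpos.le

lemma mul_tsum_div_pow_mul_pow_of_periodic {x y : ℝ} (hx : x ≠ 0) (hy : y ≠ 0) {F : ℕ → ℕ → ℝ}
    (hF : Summable fun ij : ℕ × ℕ => F ij.1 ij.2 / (x ^ ij.1 * y ^ ij.2)) {r s r' s' : ℕ}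
    (hper : ∀ i, r ≤ i → F (i + s) = F i) (hper' : ∀ i j, r' ≤ j → F i (j + s') = F i j) :
    x ^ r * (x ^ s - 1) * (y ^ r' * (y ^ s' - 1)) *
        ∑' ij : ℕ × ℕ, F ij.1 ij.2 / (x ^ ij.1 * y ^ ij.2) =
      ∑ u ∈ range (r + s + 1), ∑ v ∈ range (r' + s' + 1),
        periodicNumer r s (fun i => periodicNumer r' s' (F i) v) u * (x ^ u * y ^ v) := by
  set T : ℕ → ℝ := fun i => ∑' j, F i j / y ^ j
  set G : ℕ → ℝ := fun i => ∑ v ∈ range (r' + s' + 1), periodicNumer r' s' (F i) v * y ^ v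
  have hfiber : ∀ i, ∑' j, F i j / (x ^ i * y ^ j) = T i / x ^ i := fun i => by
    rw [← tsum_div_const]
    exact tsum_congr fun j => by rw [div_div, mul_comm]
  have hrow : ∀ i, Summable fun j => F i j / y ^ j := fun i => by
    refine ((hF.prod_factor i).mul_left (x ^ i)).congr fun j => ?_
    field_simp
  have hG : ∀ i, y ^ r' * (y ^ s' - 1) * T i = G i := fun i =>
    mul_tsum_div_pow_of_periodic hy (hrow i) (hper' i)
  have hGsum : Summable fun i => G i / x ^ i := by
    refine ((funext hfiber ▸ hF.prod).mul_left (y ^ r' * (y ^ s' - 1))).congr fun i => ?_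
    rw [← hG, mul_div_assoc]
  have hGper : ∀ i, r ≤ i → G (i + s) = G i := fun i hi => by simp only [G, hper i hi]
  calc x ^ r * (x ^ s - 1) * (y ^ r' * (y ^ s' - 1)) *
        ∑' ij : ℕ × ℕ, F ij.1 ij.2 / (x ^ ij.1 * y ^ ij.2)
      = x ^ r * (x ^ s - 1) * ∑' i, G i / x ^ i := by
        rw [hF.tsum_prod, tsum_congr hfiber, mul_assoc, ← tsum_mul_left]
        simp only [← hG, mul_div_assoc]
    _ = ∑ u ∈ range (r + s + 1), periodicNumer r s G u * x ^ u :=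
        mul_tsum_div_pow_of_periodic hx hGsum hGper
    _ = _ := by
        simp only [G, periodicNumer_sum_mul_pow, sum_mul]
        exact sum_congr rfl fun u _ => sum_congr rfl fun v _ => by ring

section BoxPolynomial

variable {R : Type*} [CommSemiring R]

noncomputable def boxPoly (m n : ℕ) (c : ℕ → ℕ → R) : MvPolynomial (Fin 2) R :=
  ∑ u ∈ range (m + 1), ∑ v ∈ range (n + 1),
    monomial (Finsupp.single 0 u + Finsupp.single 1 v) (c u v)

lemma coeff_boxPoly (m n : ℕ) (c : ℕ → ℕ → R) (e : Fin 2 →₀ ℕ) :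
    coeff e (boxPoly m n c) = if e 0 ≤ m ∧ e 1 ≤ n then c (e 0) (e 1) else 0 := by
  have key : ∀ u v : ℕ, Finsupp.single 0 u + Finsupp.single 1 v = e ↔ v = e 1 ∧ u = e 0 := by
    intro u v
    constructor
    · rintro rfl
      simp
    · rintro ⟨rfl, rfl⟩
      ext i
      fin_cases i <;> simp
  simp only [boxPoly, coeff_sum, coeff_monomial, key, ite_and, sum_ite_eq', mem_range,
    Nat.lt_succ_iff]
  split_ifs <;> simp [*]

lemma degreeOf_zero_boxPoly_le (m n : ℕ) (c : ℕ → ℕ → R) : (boxPoly m n c).degreeOf 0 ≤ m := by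
  refine (degreeOf_le_iff).2 fun e he => ?_
  rw [mem_support_iff, coeff_boxPoly] at he
  exact (ite_ne_right_iff.1 he).1.1

lemma degreeOf_one_boxPoly_le (m n : ℕ) (c : ℕ → ℕ → R) : (boxPoly m n c).degreeOf 1 ≤ n := by
  refine (degreeOf_le_iff).2 fun e he => ?_
  rw [mem_support_iff, coeff_boxPoly] at he
  exact (ite_ne_right_iff.1 he).1.2

lemma eval_boxPoly (m n : ℕ) (c : ℕ → ℕ → R) (x y : R) :
    eval ![x, y] (boxPoly m n c) =
      ∑ u ∈ range (m + 1), ∑ v ∈ range (n + 1), c u v * (x ^ u * y ^ v) := by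
  simp only [boxPoly, map_sum, eval_monomial]
  refine sum_congr rfl fun u _ => sum_congr rfl fun v _ => ?_
  rw [Finsupp.prod_add_index (by simp) fun _ _ _ _ => pow_add _ _ _]
  simp

end BoxPolynomial

/-- The rational expression for the double series attached to a pair of eventually
periodic integer sequences: `α_n = P_n(a,b) / (a^{r}(a^{s}−1) b^{r'}(b^{s'}−1))`
with controlled degrees and coefficients bounded by `4M`. -/
theorem stmt_9 (a b : ℕ) (ha : 2 ≤ a) (hb : 2 ≤ b) (f : ℤ → ℤ → ℤ)
    (p q : ℕ → ℤ) (r s r' s' : ℕ) (hs : 1 ≤ s) (hs' : 1 ≤ s')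
    (hp : ∀ k, r ≤ k → p (k + s) = p k) (hq : ∀ k, r' ≤ k → q (k + s') = q k)
    (M : ℤ) (hM : ∀ i j, |f (p i) (q j)| ≤ M) :
    Summable (fun ij : ℕ × ℕ => (f (p ij.1) (q ij.2) : ℝ) / ((a : ℝ) ^ ij.1 * (b : ℝ) ^ ij.2)) ∧
    ∃ P : MvPolynomial (Fin 2) ℤ,
      P.degreeOf 0 ≤ r + s ∧ P.degreeOf 1 ≤ r' + s' ∧
      (∀ m : Fin 2 →₀ ℕ, |MvPolynomial.coeff m P| ≤ 4 * M) ∧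
      (∑' ij : ℕ × ℕ, (f (p ij.1) (q ij.2) : ℝ) / ((a : ℝ) ^ ij.1 * (b : ℝ) ^ ij.2))
        = ((MvPolynomial.eval ![(a : ℤ), (b : ℤ)] P : ℤ) : ℝ) /
            ((a : ℝ) ^ r * ((a : ℝ) ^ s - 1) * ((b : ℝ) ^ r' * ((b : ℝ) ^ s' - 1))) := by
  have hx : (1 : ℝ) < a := by exact_mod_cast ha
  have hy : (1 : ℝ) < b := by exact_mod_cast hb
  have hsum := summable_div_pow_mul_pow hx hy (c := fun ij => (f (p ij.1) (q ij.2) : ℝ))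
    (M := M) fun ij => by exact_mod_cast hM ij.1 ij.2
  set c : ℕ → ℕ → ℤ := fun u v =>
    periodicNumer r s (fun i => periodicNumer r' s' (fun j => f (p i) (q j)) v) u with hc
  have hc_le : ∀ u v, |c u v| ≤ 4 * M := fun u v => by
    linarith [abs_periodicNumer_le (fun i => abs_periodicNumer_le (hM i) r' s' v) r s u]
  refine ⟨hsum, boxPoly (r + s) (r' + s') c, degreeOf_zero_boxPoly_le ..,
    degreeOf_one_boxPoly_le .., fun e => ?_, ?_⟩
  · rw [coeff_boxPoly]
    split_ifs
    exacts [hc_le _ _, by simpa using (hc_le 0 0).trans' (abs_nonneg _)]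
  · have hden : (a : ℝ) ^ r * ((a : ℝ) ^ s - 1) * ((b : ℝ) ^ r' * ((b : ℝ) ^ s' - 1)) ≠ 0 := by
      have := one_lt_pow₀ hx (by omega : s ≠ 0)
      have := one_lt_pow₀ hy (by omega : s' ≠ 0)
      apply ne_of_gt
      positivity
    rw [eq_div_iff hden, mul_comm, mul_tsum_div_pow_mul_pow_of_periodic (by positivity)
      (by positivity) (F := fun i j => (f (p i) (q j) : ℝ)) hsum
      (fun i hi => by simp only [hp i hi]) (fun i j hj => by simp only [hq j hj]), eval_boxPoly]
    push_cast [hc, Int.cast_periodicNumer]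
    rfl
end
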